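/- Fix ε ∈ (0,1), positive functions p̃(y,x) (joint density), p̃(x) (with 0 < ∫ p̃(y,x) dy ≤ p̃-marginal) and nonnegative functions δ_y(y), δ_x(x). Define p̃_ε(y,x) = (1-ε)·p̃(y,x) + ε·δ_y(y)·δ_x(x) and p̃_ε(x) = (1-ε)·(∫ p̃(y,x) dy) + ε·δ_x(x), assumed positive. Then (1/ε)·∫∫ y · ( p̃_ε(y,x)/p̃_ε(x) − p̃(y,x)/(∫ p̃(y',x) dy') ) dy dx = ∫ (δ_x(x)/p̃_ε(x)) · ( (∫ y·δ_y(y) dy) − (∫ y·p̃(y,x) dy)/(∫ p̃(y,x) dy) ) dx, whenever all integrals are finite. -/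
import Mathlib


open MeasureTheory

/-- Exact intermediate decomposition of the finite-difference quotient of the
integrated conditional expectation under a mixture perturbation. -/
theorem stmt_1 (ε : ℝ) (hε : ε ∈ Set.Ioo (0 : ℝ) 1)
    (p : ℝ → ℝ → ℝ) (δy δx : ℝ → ℝ)
    (hp : ∀ y x, 0 < p y x) (hδy : ∀ y, 0 ≤ δy y) (hδx : ∀ x, 0 ≤ δx x)
    (hmarg : ∀ x, 0 < ∫ y, p y x)
    (hden : ∀ x, 0 < (1 - ε) * (∫ y, p y x) + ε * δx x)
    (hint1 : ∀ x, Integrable (fun y =>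
      y * (((1 - ε) * p y x + ε * δy y * δx x) / ((1 - ε) * (∫ y', p y' x) + ε * δx x)
            - p y x / (∫ y', p y' x))))
    (hint2 : Integrable (fun x => ∫ y,
      y * (((1 - ε) * p y x + ε * δy y * δx x) / ((1 - ε) * (∫ y', p y' x) + ε * δx x)
            - p y x / (∫ y', p y' x))))
    (hint3 : ∀ x, Integrable (fun y => p y x))
    (hint4 : ∀ x, Integrable (fun y => y * p y x))
    (hint5 : Integrable (fun y => y * δy y))
    (hint6 : Integrable (fun x =>
      (δx x / ((1 - ε) * (∫ y', p y' x) + ε * δx x))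
        * ((∫ y, y * δy y) - (∫ y, y * p y x) / (∫ y, p y x)))) :
    (1 / ε) * ∫ x, ∫ y,
        y * (((1 - ε) * p y x + ε * δy y * δx x) / ((1 - ε) * (∫ y', p y' x) + ε * δx x)
              - p y x / (∫ y', p y' x))
      = ∫ x, (δx x / ((1 - ε) * (∫ y', p y' x) + ε * δx x))
          * ((∫ y, y * δy y) - (∫ y, y * p y x) / (∫ y, p y x)) := by
  have key : ∀ x, (∫ y,
      y * (((1 - ε) * p y x + ε * δy y * δx x) / ((1 - ε) * (∫ y', p y' x) + ε * δx x)
            - p y x / (∫ y', p y' x)))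
      = ε * ((δx x / ((1 - ε) * (∫ y', p y' x) + ε * δx x))
          * ((∫ y, y * δy y) - (∫ y, y * p y x) / (∫ y, p y x))) := by
    intro x
    set P := ∫ y, p y x with hP
    set Q := (1 - ε) * P + ε * δx x with hQ
    have hPne : P ≠ 0 := (hmarg x).ne'
    have hQne : Q ≠ 0 := (hden x).ne'
    have hfun : (fun y => y * (((1 - ε) * p y x + ε * δy y * δx x) / Q - p y x / P))
        = fun y => ((1 - ε) / Q - 1 / P) * (y * p y x) + (ε * δx x / Q) * (y * δy y) := by
      funext y
      field_simp
      ring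
    rw [hfun, integral_add (((hint4 x).const_mul _)) (hint5.const_mul _),
      integral_const_mul, integral_const_mul]
    field_simp
    ring
  have hε0 : (ε : ℝ) ≠ 0 := hε.1.ne'
  calc (1 / ε) * ∫ x, ∫ y,
        y * (((1 - ε) * p y x + ε * δy y * δx x) / ((1 - ε) * (∫ y', p y' x) + ε * δx x)
              - p y x / (∫ y', p y' x))
      = (1 / ε) * ∫ x, ε * ((δx x / ((1 - ε) * (∫ y', p y' x) + ε * δx x))
          * ((∫ y, y * δy y) - (∫ y, y * p y x) / (∫ y, p y x))) := by
        congr 1; exact integral_congr_ae (Filter.Eventually.of_forall key)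
    _ = ∫ x, (δx x / ((1 - ε) * (∫ y', p y' x) + ε * δx x))
          * ((∫ y, y * δy y) - (∫ y, y * p y x) / (∫ y, p y x)) := by
        rw [integral_const_mul]; field_simp
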